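/- Let g₂, g₃, x, y, z, x', y', z' ∈ ℂ satisfy x'² = 4x³ − g₂x − g₃, y'² = 4y³ − g₂y − g₃, z'² = 4z³ − g₂z − g₃, with x, y, z pairwise distinct, and set A = (x'−y')/(x−y), B = (xy'−yx')/(x−y); assume z' = Az + B. Then (xy + yz + zx + g₂/4)² = 4(x + y + z)(xyz − g₃/4). In other words, (x,y,z) lies on the zero locus of the Kontsevich polynomial D_{0,−g₂/4,−g₃/4}. -/

import Mathlib

/-!
The secant `v = A u + B` meets the cubic `v² = 4u³ - g₂u - g₃` where
`4u³ - A²u² - (2AB + g₂)u - (B² + g₃) = 0`. Since `x, y, z` are three distinct roots of this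
cubic, Vieta's formulas give `A² = 4σ₁`, `2AB + g₂ = -4σ₂` and `B² + g₃ = 4σ₃`; eliminating
`A` and `B` through `(2AB)² = 4A²B²` yields the Kontsevich relation.
-/

section Vieta

variable {R : Type*} [CommRing R] [IsDomain R]

theorem cubic_coeffs_eq_of_three_roots {d a b c x y z : R}
    (hxy : x ≠ y) (hyz : y ≠ z) (hxz : x ≠ z)
    (hx : d*x^3 + a*x^2 + b*x + c = 0)
    (hy : d*y^3 + a*y^2 + b*y + c = 0)
    (hz : d*z^3 + a*z^2 + b*z + c = 0) :
    a = -d*(x + y + z) ∧ b = d*(x*y + y*z + z*x) ∧ c = -d*(x*y*z) := by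
  -- divided differences of the cubic at `x, y` and at `y, z`
  have hdxy : d*(x^2 + x*y + y^2) + a*(x + y) + b = 0 :=
    mul_left_cancel₀ (sub_ne_zero.mpr hxy) (by linear_combination hx - hy)
  have hdyz : d*(y^2 + y*z + z^2) + a*(y + z) + b = 0 :=
    mul_left_cancel₀ (sub_ne_zero.mpr hyz) (by linear_combination hy - hz)
  have ha : a = -d*(x + y + z) :=
    mul_left_cancel₀ (sub_ne_zero.mpr hxz) (by linear_combination hdxy - hdyz)
  have hb : b = d*(x*y + y*z + z*x) := by linear_combination hdxy - (x + y)*ha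
  exact ⟨ha, hb, by linear_combination hx - x^2*ha - x*hb⟩

theorem secant_coeffs_of_weierstrass {g₂ g₃ A B x y z : R}
    (hxy : x ≠ y) (hyz : y ≠ z) (hxz : x ≠ z)
    (hx : (A*x + B)^2 = 4*x^3 - g₂*x - g₃)
    (hy : (A*y + B)^2 = 4*y^3 - g₂*y - g₃)
    (hz : (A*z + B)^2 = 4*z^3 - g₂*z - g₃) :
    A^2 = 4*(x + y + z) ∧ 2*A*B + g₂ = -4*(x*y + y*z + z*x) ∧ B^2 + g₃ = 4*(x*y*z) := by
  obtain ⟨h₂, h₁, h₀⟩ := cubic_coeffs_eq_of_three_roots (d := 4) (a := -A^2)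
    (b := -(2*A*B + g₂)) (c := -(B^2 + g₃)) hxy hyz hxz
    (by linear_combination -hx) (by linear_combination -hy) (by linear_combination -hz)
  exact ⟨by linear_combination -h₂, by linear_combination -h₁, by linear_combination -h₀⟩

end Vieta

theorem secant_eval_left {K : Type*} [Field K] {x y x' y' : K} (hxy : x ≠ y) :
    (x' - y')/(x - y) * x + (x*y' - y*x')/(x - y) = x' := by
  field_simp [sub_ne_zero.mpr hxy]
  ring

theorem secant_eval_right {K : Type*} [Field K] {x y x' y' : K} (hxy : x ≠ y) :
    (x' - y')/(x - y) * y + (x*y' - y*x')/(x - y) = y' := by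
  field_simp [sub_ne_zero.mpr hxy]
  ring

/-- Under the Burnside collinearity condition, `(x,y,z)` lies on
the zero locus of the Kontsevich polynomial `D_{0,−g₂/4,−g₃/4}`:
`(xy + yz + zx + g₂/4)² = 4(x + y + z)(xyz − g₃/4)`. -/
theorem burnside_kontsevich_locus (g₂ g₃ x y z x' y' z' : ℂ)
    (hx : x'^2 = 4*x^3 - g₂*x - g₃)
    (hy : y'^2 = 4*y^3 - g₂*y - g₃)
    (hz : z'^2 = 4*z^3 - g₂*z - g₃)
    (hxy : x ≠ y) (hyz : y ≠ z) (hxz : x ≠ z)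
    (A B : ℂ)
    (hA : A = (x' - y')/(x - y))
    (hB : B = (x*y' - y*x')/(x - y))
    (hlin : z' = A*z + B) :
    (x*y + y*z + z*x + g₂/4)^2 = 4*(x + y + z)*(x*y*z - g₃/4) := by
  have hAx : A*x + B = x' := hA ▸ hB ▸ secant_eval_left hxy
  have hAy : A*y + B = y' := hA ▸ hB ▸ secant_eval_right hxy
  obtain ⟨hA2, hAB, hB2⟩ := secant_coeffs_of_weierstrass hxy hyz hxz
    (hAx ▸ hx) (hAy ▸ hy) (hlin ▸ hz)
  have hABsq : (2*A*B)^2 = (-4*(x*y + y*z + z*x) - g₂)^2 := by rw [eq_sub_of_add_eq hAB]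
  linear_combination (-1/16 : ℂ)*hABsq + (B^2/4)*hA2 + (x + y + z)*hB2
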